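/- arXiv:2004.01280 — 2 statements merged into one kernel-verified Lean document; each statement's English description precedes it below -/
import Mathlib

section
/- Let a < b be real numbers and let u : ℝ → ℝ be continuously differentiable on [a,b] with u(a) = 0 and u(b) = 0. Then ∫_a^b u(x)² dx ≤ ((b−a)/π)² · ∫_a^b u′(x)² dx. -/
/-!
Put `c = π / (b - a)` and `w x = c cot (c (x - a))`. On `(a, b)` the weight `w` solves the
Riccati equation `w' = -(c² + w²)`, so Picone's identity `(u² w)' = u'² - c² u² - (u' - u w)²`
holds there. Since `u` is Lipschitz and vanishes at both endpoints, `u² w = O(|x - a|)` near `a`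
and likewise near `b`, so `u² w` is continuous on `[a, b]` with value `0` at the endpoints.
Integrating `(u² w)' ≤ u'² - c² u²` over `[a, b]` gives `0 ≤ ∫ u'² - c² ∫ u²`.
-/

open Real Set Filter Topology MeasureTheory

namespace Real

theorem hasDerivAt_cot {x : ℝ} (hx : sin x ≠ 0) : HasDerivAt cot (-(1 + cot x ^ 2)) x := by
  rw [show cot = fun y => cos y / sin y from funext cot_eq_cos_div_sin]
  refine ((hasDerivAt_cos x).div (hasDerivAt_sin x) hx).congr_deriv ?_
  field_simp
  ring

theorem cot_add_pi (x : ℝ) : cot (x + π) = cot x := by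
  simp only [cot_eq_cos_div_sin, cos_add_pi, sin_add_pi, neg_div_neg_eq]

theorem abs_mul_cot_le {x : ℝ} (hx : |x| ≤ π / 2) : |x * cot x| ≤ π / 2 := by
  rcases eq_or_ne x 0 with rfl | hx0
  · simpa using pi_div_two_pos.le
  have hsin : 2 / π * |x| ≤ |sin x| := mul_abs_le_abs_sin hx
  have hsin_pos : 0 < |sin x| := lt_of_lt_of_le (by positivity) hsin
  rw [cot_eq_cos_div_sin, abs_mul, abs_div, mul_div_assoc', div_le_iff₀ hsin_pos]
  calc |x| * |cos x| ≤ |x| := mul_le_of_le_one_right (abs_nonneg x) (abs_cos_le_one x)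
    _ = π / 2 * (2 / π * |x|) := by field_simp
    _ ≤ π / 2 * |sin x| := by gcongr

end Real

theorem HasDerivAt.sq_mul_of_riccati {u w : ℝ → ℝ} {u' k x : ℝ} (hu : HasDerivAt u u' x)
    (hw : HasDerivAt w (-(k + w x ^ 2)) x) :
    HasDerivAt (fun y => u y ^ 2 * w y) (u' ^ 2 - k * u x ^ 2 - (u' - u x * w x) ^ 2) x := by
  refine ((hu.fun_pow 2).mul hw).congr_deriv ?_
  ring

theorem hasDerivAt_mul_cot_mul_sub {c x₀ x : ℝ} (hx : sin (c * (x - x₀)) ≠ 0) :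
    HasDerivAt (fun y => c * cot (c * (y - x₀))) (-(c ^ 2 + (c * cot (c * (x - x₀))) ^ 2)) x := by
  have hlin : HasDerivAt (fun y => c * (y - x₀)) c x := by
    simpa using ((hasDerivAt_id x).sub_const x₀).const_mul c
  refine (((hasDerivAt_cot hx).comp x hlin).const_mul c).congr_deriv ?_
  ring

theorem tendsto_sq_mul_cot_of_abs_le {u : ℝ → ℝ} {s : Set ℝ} {c C x₀ : ℝ}
    (hu : ∀ x ∈ s, |u x| ≤ C * |x - x₀|) :
    Tendsto (fun x => u x ^ 2 * (c * cot (c * (x - x₀)))) (𝓝[s] x₀) (𝓝 0) := by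
  have hsmall : ∀ᶠ x in 𝓝 x₀, |c * (x - x₀)| ≤ π / 2 := by
    have hcont : Continuous fun x => c * (x - x₀) := by fun_prop
    have h : Tendsto (fun x => c * (x - x₀)) (𝓝 x₀) (𝓝 0) := by simpa using hcont.tendsto x₀
    filter_upwards [h.eventually (eventually_abs_sub_lt 0 (half_pos pi_pos))] with x hx
    simpa using hx.le
  have hlim : Tendsto (fun x => π / 2 * C ^ 2 * |x - x₀|) (𝓝[s] x₀) (𝓝 0) := by
    have hcont : Continuous fun x => π / 2 * C ^ 2 * |x - x₀| := by fun_prop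
    simpa using (hcont.tendsto x₀).mono_left nhdsWithin_le_nhds
  refine squeeze_zero_norm' ?_ hlim
  filter_upwards [self_mem_nhdsWithin, nhdsWithin_le_nhds hsmall] with x hx hxsmall
  have hu2 : u x ^ 2 ≤ C ^ 2 * |x - x₀| ^ 2 := by
    rw [← sq_abs, ← mul_pow]; exact pow_le_pow_left₀ (abs_nonneg _) (hu x hx) 2
  calc ‖u x ^ 2 * (c * cot (c * (x - x₀)))‖ = u x ^ 2 * |c * cot (c * (x - x₀))| := by
        rw [Real.norm_eq_abs, abs_mul, abs_of_nonneg (sq_nonneg _)]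
    _ ≤ C ^ 2 * |x - x₀| ^ 2 * |c * cot (c * (x - x₀))| := by gcongr
    _ = C ^ 2 * |x - x₀| * |c * (x - x₀) * cot (c * (x - x₀))| := by
        simp only [abs_mul]; ring
    _ ≤ C ^ 2 * |x - x₀| * (π / 2) := by gcongr; exact abs_mul_cot_le hxsmall
    _ = π / 2 * C ^ 2 * |x - x₀| := by ring

theorem integral_sq_deriv_sub_sq_nonneg {a b : ℝ} (hab : a < b) {u u' : ℝ → ℝ}
    (hderiv : ∀ x ∈ Icc a b, HasDerivWithinAt u (u' x) (Icc a b) x)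
    (hcont : ContinuousOn u' (Icc a b)) (ha : u a = 0) (hb : u b = 0) :
    0 ≤ ∫ x in a..b, (u' x ^ 2 - (π / (b - a)) ^ 2 * u x ^ 2) := by
  set c := π / (b - a)
  have hc : 0 < c := div_pos pi_pos (sub_pos.2 hab)
  have hcπ : c * (b - a) = π := div_mul_cancel₀ _ (sub_pos.2 hab).ne'
  set w : ℝ → ℝ := fun x => c * cot (c * (x - a))
  have hw_b : w = fun x => c * cot (c * (x - b)) := by
    ext x
    show c * cot (c * (x - a)) = _
    rw [show c * (x - a) = c * (x - b) + π by rw [← hcπ]; ring, cot_add_pi]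
  obtain ⟨M, hM⟩ := isCompact_Icc.exists_bound_of_continuousOn hcont
  have hLip : ∀ x₀ ∈ Icc a b, ∀ x ∈ Icc a b, |u x - u x₀| ≤ M * |x - x₀| := fun x₀ hx₀ x hx =>
    (convex_Icc a b).norm_image_sub_le_of_norm_hasDerivWithin_le hderiv hM hx₀ hx
  have hG : ∀ x ∈ Ioo a b, HasDerivAt (fun y => u y ^ 2 * w y)
      (u' x ^ 2 - c ^ 2 * u x ^ 2 - (u' x - u x * w x) ^ 2) x := by
    intro x hx
    have hsin : sin (c * (x - a)) ≠ 0 := by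
      refine (sin_pos_of_pos_of_lt_pi ?_ ?_).ne'
      · exact mul_pos hc (sub_pos.2 hx.1)
      · rw [← hcπ]
        exact mul_lt_mul_of_pos_left (by linarith [hx.2]) hc
    have hu : HasDerivAt u (u' x) x :=
      (hderiv x (Ioo_subset_Icc_self hx)).hasDerivAt (Icc_mem_nhds hx.1 hx.2)
    exact hu.sq_mul_of_riccati (hasDerivAt_mul_cot_mul_sub hsin)
  have hG_cont : ContinuousOn (fun y => u y ^ 2 * w y) (Icc a b) := by
    intro x hx
    rcases eq_endpoints_or_mem_Ioo_of_mem_Icc hx with rfl | rfl | hx'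
    · rw [ContinuousWithinAt, ha, zero_pow two_ne_zero, zero_mul]
      exact tendsto_sq_mul_cot_of_abs_le fun y hy => by simpa [ha] using hLip x hx y hy
    · rw [ContinuousWithinAt, hb, zero_pow two_ne_zero, zero_mul, hw_b]
      exact tendsto_sq_mul_cot_of_abs_le fun y hy => by simpa [hb] using hLip x hx y hy
    · exact (hG x hx').continuousAt.continuousWithinAt
  have hf_int : IntegrableOn (fun x => u' x ^ 2 - c ^ 2 * u x ^ 2) (Icc a b) := by
    have hu_cont : ContinuousOn u (Icc a b) := fun x hx => (hderiv x hx).continuousWithinAt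
    exact ((hcont.pow 2).sub (continuousOn_const.mul (hu_cont.pow 2))).integrableOn_Icc
  have := intervalIntegral.sub_le_integral_of_hasDeriv_right_of_le hab.le hG_cont
    (fun x hx => (hG x hx).hasDerivWithinAt) hf_int (fun x _ => sub_le_self _ (sq_nonneg _))
  simpa [ha, hb] using this

/-- **Poincaré inequality on an interval with zero boundary values and optimal
constant `(b-a)/π`.**  If `u` is continuously differentiable on `[a, b]` with
`u a = 0` and `u b = 0`, then `∫_a^b u² ≤ ((b-a)/π)² ∫_a^b u'²`. -/
theorem poincare_inequality_interval
    (a b : ℝ) (hab : a < b) (u u' : ℝ → ℝ)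
    (hderiv : ∀ x ∈ Set.Icc a b, HasDerivWithinAt u (u' x) (Set.Icc a b) x)
    (hcont : ContinuousOn u' (Set.Icc a b))
    (ha : u a = 0) (hb : u b = 0) :
    ∫ x in a..b, (u x) ^ 2 ≤ ((b - a) / Real.pi) ^ 2 * ∫ x in a..b, (u' x) ^ 2 := by
  have hu_cont : ContinuousOn u (Icc a b) := fun x hx => (hderiv x hx).continuousWithinAt
  have hu2_int : IntervalIntegrable (fun x => u x ^ 2) volume a b :=
    (hu_cont.pow 2).intervalIntegrable_of_Icc hab.le
  have hu'2_int : IntervalIntegrable (fun x => u' x ^ 2) volume a b :=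
    (hcont.pow 2).intervalIntegrable_of_Icc hab.le
  have hkey := integral_sq_deriv_sub_sq_nonneg hab hderiv hcont ha hb
  rw [intervalIntegral.integral_sub hu'2_int (hu2_int.const_mul _),
    intervalIntegral.integral_const_mul, sub_nonneg] at hkey
  calc ∫ x in a..b, u x ^ 2
      = ((b - a) / π) ^ 2 * ((π / (b - a)) ^ 2 * ∫ x in a..b, u x ^ 2) := by
        have : b - a ≠ 0 := (sub_pos.2 hab).ne'
        field_simp
    _ ≤ ((b - a) / π) ^ 2 * ∫ x in a..b, u' x ^ 2 := by gcongr
end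

section
/- Let k ≥ 1 be an integer and set h = 1/k. Let u : ℝ → ℝ be continuously differentiable on [0,1] and suppose u(i·h) = 0 for every i ∈ {0, 1, …, k}. Then ∫_0^1 u(x)² dx ≤ (h/π)² · ∫_0^1 u′(x)² dx. -/
/-!
Wirtinger's inequality on each mesh interval, summed. For `[a, b]` and `0 < c` with
`c (b - a) < π`, a suitably phase-shifted `φ = c cot (c x + d)` is smooth on `[a, b]` and solves
the Riccati equation `φ' = -c² - φ²`, so `(φ u²)' = u'² - c² u² - (u' - φ u)²`. Integrating over
`[a, b]`, the boundary terms vanish because `u(a) = u(b) = 0`, whence `c² ∫ u² ≤ ∫ u'²`; then let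
`c ↑ π / (b - a)`.
-/

open Set Real MeasureTheory intervalIntegral Filter Topology

theorem Real.hasDerivAt_cot_s1 {x : ℝ} (hx : sin x ≠ 0) : HasDerivAt cot (-1 - cot x ^ 2) x := by
  rw [show cot = fun y => cos y / sin y from funext cot_eq_cos_div_sin]
  refine ((hasDerivAt_cos x).div (hasDerivAt_sin x) hx).congr_deriv ?_
  field_simp

theorem HasDerivAt.mul_sq_of_riccati {φ u : ℝ → ℝ} {lam v x : ℝ}
    (hφ : HasDerivAt φ (-lam - φ x ^ 2) x) (hu : HasDerivAt u v x) :
    HasDerivAt (fun y => φ y * u y ^ 2) (v ^ 2 - lam * u x ^ 2 - (v - φ x * u x) ^ 2) x :=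
  (hφ.mul (hu.pow 2)).congr_deriv (by simp only [Pi.pow_apply]; ring)

theorem mul_integral_sq_le_of_riccati {a b lam : ℝ} {u u' φ : ℝ → ℝ} (hab : a ≤ b)
    (hderiv : ∀ x ∈ Icc a b, HasDerivWithinAt u (u' x) (Icc a b) x)
    (hcont : ContinuousOn u' (Icc a b)) (hua : u a = 0) (hub : u b = 0)
    (hφ : ∀ x ∈ Icc a b, HasDerivAt φ (-lam - φ x ^ 2) x) :
    lam * ∫ x in a..b, u x ^ 2 ≤ ∫ x in a..b, u' x ^ 2 := by
  have hu : ContinuousOn u (Icc a b) := fun x hx => (hderiv x hx).continuousWithinAt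
  have hφc : ContinuousOn φ (Icc a b) := fun x hx => (hφ x hx).continuousAt.continuousWithinAt
  have hu'2 : IntervalIntegrable (fun x => u' x ^ 2) volume a b :=
    (hcont.pow 2).intervalIntegrable_of_Icc hab
  have hu2 : IntervalIntegrable (fun x => lam * u x ^ 2) volume a b :=
    (continuousOn_const.mul (hu.pow 2)).intervalIntegrable_of_Icc hab
  have hrem : IntervalIntegrable (fun x => (u' x - φ x * u x) ^ 2) volume a b :=
    ((hcont.sub (hφc.mul hu)).pow 2).intervalIntegrable_of_Icc hab
  have hFTC : ∫ x in a..b, (u' x ^ 2 - lam * u x ^ 2 - (u' x - φ x * u x) ^ 2) = 0 := by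
    rw [integral_eq_sub_of_hasDerivAt_of_le hab (hφc.mul (hu.pow 2))
      (fun x hx => (hφ x (Ioo_subset_Icc_self hx)).mul_sq_of_riccati
        ((hderiv x (Ioo_subset_Icc_self hx)).hasDerivAt (Icc_mem_nhds hx.1 hx.2)))
      ((hu'2.sub hu2).sub hrem)]
    simp [hua, hub]
  rw [integral_sub (hu'2.sub hu2) hrem, integral_sub hu'2 hu2,
    intervalIntegral.integral_const_mul] at hFTC
  have hrem_nonneg : 0 ≤ ∫ x in a..b, (u' x - φ x * u x) ^ 2 :=
    integral_nonneg hab fun x _ => sq_nonneg _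
  linarith

theorem sq_mul_integral_sq_le_of_mul_lt_pi {a b c : ℝ} {u u' : ℝ → ℝ} (hab : a ≤ b)
    (hc : 0 < c) (hcπ : c * (b - a) < π)
    (hderiv : ∀ x ∈ Icc a b, HasDerivWithinAt u (u' x) (Icc a b) x)
    (hcont : ContinuousOn u' (Icc a b)) (hua : u a = 0) (hub : u b = 0) :
    c ^ 2 * ∫ x in a..b, u x ^ 2 ≤ ∫ x in a..b, u' x ^ 2 := by
  -- `θ` maps `[a, b]` symmetrically into `(0, π)`, away from the poles of `cot`.
  set θ : ℝ → ℝ := fun x => c * (x - a) + (π - c * (b - a)) / 2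
  have hθ : ∀ x, HasDerivAt θ c x := fun x =>
    ((((hasDerivAt_id x).sub_const a).const_mul c).add_const _).congr_deriv (mul_one c)
  refine neg_neg (c ^ 2) ▸ mul_integral_sq_le_of_riccati hab hderiv hcont hua hub
    (φ := fun x => c * cot (θ x)) fun x hx => ?_
  have hsin : sin (θ x) ≠ 0 := by
    have hlow : 0 ≤ c * (x - a) := mul_nonneg hc.le (sub_nonneg.2 hx.1)
    have hup : c * (x - a) ≤ c * (b - a) := mul_le_mul_of_nonneg_left (by linarith [hx.2]) hc.le
    exact (sin_pos_of_pos_of_lt_pi (show 0 < θ x by simp only [θ]; linarith)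
      (show θ x < π by simp only [θ]; linarith)).ne'
  refine (((hasDerivAt_cot_s1 hsin).comp x (hθ x)).const_mul c).congr_deriv ?_
  ring

theorem integral_sq_le_of_vanishing_endpoints {a b : ℝ} {u u' : ℝ → ℝ} (hab : a ≤ b)
    (hderiv : ∀ x ∈ Icc a b, HasDerivWithinAt u (u' x) (Icc a b) x)
    (hcont : ContinuousOn u' (Icc a b)) (hua : u a = 0) (hub : u b = 0) :
    ∫ x in a..b, u x ^ 2 ≤ ((b - a) / π) ^ 2 * ∫ x in a..b, u' x ^ 2 := by
  rcases hab.eq_or_lt with rfl | hlt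
  · simp
  have hL : 0 < b - a := sub_pos.2 hlt
  have hlim : Tendsto (fun c => c ^ 2 * ∫ x in a..b, u x ^ 2) (𝓝[<] (π / (b - a)))
      (𝓝 ((π / (b - a)) ^ 2 * ∫ x in a..b, u x ^ 2)) :=
    ((continuous_pow 2).mul continuous_const).tendsto _ |>.mono_left nhdsWithin_le_nhds
  have hbound : (π / (b - a)) ^ 2 * ∫ x in a..b, u x ^ 2 ≤ ∫ x in a..b, u' x ^ 2 := by
    refine le_of_tendsto hlim ?_
    filter_upwards [Ioo_mem_nhdsLT (div_pos pi_pos hL)] with c hc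
    exact sq_mul_integral_sq_le_of_mul_lt_pi hab hc.1 ((lt_div_iff₀ hL).1 hc.2)
      hderiv hcont hua hub
  calc ∫ x in a..b, u x ^ 2
        = ((b - a) / π) ^ 2 * ((π / (b - a)) ^ 2 * ∫ x in a..b, u x ^ 2) := by field_simp
    _ ≤ ((b - a) / π) ^ 2 * ∫ x in a..b, u' x ^ 2 := by gcongr

theorem integral_sq_le_of_vanishing_at_nodes {k : ℕ} {h : ℝ} {x : ℕ → ℝ} {u u' : ℝ → ℝ}
    (hx : Monotone x) (hgap : ∀ i < k, x (i + 1) - x i ≤ h)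
    (hderiv : ∀ y ∈ Icc (x 0) (x k), HasDerivWithinAt u (u' y) (Icc (x 0) (x k)) y)
    (hcont : ContinuousOn u' (Icc (x 0) (x k))) (hnodes : ∀ i ≤ k, u (x i) = 0) :
    ∫ y in x 0..x k, u y ^ 2 ≤ (h / π) ^ 2 * ∫ y in x 0..x k, u' y ^ 2 := by
  have hsub : ∀ i < k, Icc (x i) (x (i + 1)) ⊆ Icc (x 0) (x k) := fun i hi =>
    Icc_subset_Icc (hx (Nat.zero_le i)) (hx hi)
  have hu : ContinuousOn u (Icc (x 0) (x k)) := fun y hy => (hderiv y hy).continuousWithinAt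
  have hint : ∀ {f : ℝ → ℝ}, ContinuousOn f (Icc (x 0) (x k)) →
      ∀ i < k, IntervalIntegrable (fun y => f y ^ 2) volume (x i) (x (i + 1)) := fun hf i hi =>
    ((hf.mono (hsub i hi)).pow 2).intervalIntegrable_of_Icc (hx i.le_succ)
  have hpiece : ∀ i < k, ∫ y in x i..x (i + 1), u y ^ 2 ≤
      (h / π) ^ 2 * ∫ y in x i..x (i + 1), u' y ^ 2 := fun i hi =>
    (integral_sq_le_of_vanishing_endpoints (hx i.le_succ)
      (fun y hy => (hderiv y (hsub i hi hy)).mono (hsub i hi)) (hcont.mono (hsub i hi))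
      (hnodes i hi.le) (hnodes (i + 1) hi)).trans <| by
        gcongr
        · exact integral_nonneg (hx i.le_succ) fun y _ => sq_nonneg _
        · exact div_nonneg (sub_nonneg.2 (hx i.le_succ)) pi_pos.le
        · exact hgap i hi
  rw [← sum_integral_adjacent_intervals (hint hu), ← sum_integral_adjacent_intervals (hint hcont),
    Finset.mul_sum]
  exact Finset.sum_le_sum fun i hi => hpiece i (Finset.mem_range.1 hi)

/-- **Mesh Poincaré inequality.**  If `u` is continuously differentiable on `[0,1]`
and vanishes at all mesh nodes `i/k`, `i = 0, …, k`, then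
`∫_0^1 u² ≤ (h/π)² ∫_0^1 u'²` where `h = 1/k`. -/
theorem poincare_inequality_mesh
    (k : ℕ) (hk : 1 ≤ k) (h : ℝ) (hh : h = 1 / k) (u u' : ℝ → ℝ)
    (hderiv : ∀ x ∈ Set.Icc (0 : ℝ) 1, HasDerivWithinAt u (u' x) (Set.Icc (0 : ℝ) 1) x)
    (hcont : ContinuousOn u' (Set.Icc (0 : ℝ) 1))
    (hnodes : ∀ i : ℕ, i ≤ k → u (i * h) = 0) :
    ∫ x in (0 : ℝ)..1, (u x) ^ 2 ≤ (h / Real.pi) ^ 2 * ∫ x in (0 : ℝ)..1, (u' x) ^ 2 := by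
  have hk₀ : (k : ℝ) ≠ 0 := Nat.cast_ne_zero.2 (Nat.one_le_iff_ne_zero.1 hk)
  have hmesh : Monotone fun i : ℕ => (i : ℝ) * h := fun i j hij =>
    mul_le_mul_of_nonneg_right (Nat.cast_le.2 hij) (by rw [hh]; positivity)
  have hend : (k : ℝ) * h = 1 := by rw [hh]; field_simp
  simpa [hend] using integral_sq_le_of_vanishing_at_nodes (k := k) hmesh
    (fun i _ => le_of_eq (by push_cast; ring)) (by simpa [hend] using hderiv)
    (by simpa [hend] using hcont) hnodes
end
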